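/- arXiv:2302.11293 — 7 statements merged into one kernel-verified Lean document; each statement's English description precedes it below -/
import Mathlib

section
/- Let $T_n$ be the $n \times n$ real matrix with entries $(T_n)_{ij} = \mathbb{1}_{i\ge j} - \mathbb{1}_{i\le j}$ (so $+1$ below the diagonal, $-1$ above, $0$ on the diagonal). Then the characteristic polynomial of $T_n$ is $\det(\lambda I - T_n) = \frac{(\lambda+1)^n + (\lambda-1)^n}{2}$. -/
/-!
Let `J` be the all-ones matrix. Adding `J` to `λI - Tₙ` gives an upper triangular matrix with
diagonal `λ + 1`, subtracting it gives a lower triangular one with diagonal `λ - 1`. By the matrix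
determinant lemma `t ↦ det (A + t J)` is affine, so `det (λI - Tₙ)` is the average of
`(λ + 1)ⁿ` and `(λ - 1)ⁿ`.
-/

open Polynomial Matrix

namespace Matrix

variable {m R : Type*} [Fintype m] [DecidableEq m] [CommRing R]

theorem det_add_vecMulVec_add_det_sub_vecMulVec {A : Matrix m m R} (hA : IsUnit A.det)
    (u v : m → R) :
    (A + vecMulVec u v).det + (A - vecMulVec u v).det = 2 * A.det := by
  have hsub : A - vecMulVec u v = A + vecMulVec ((-1 : R) • u) v := by
    rw [smul_vecMulVec, neg_one_smul, sub_eq_add_neg]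
  rw [hsub, vecMulVec_eq Unit, vecMulVec_eq Unit, det_add_replicateCol_mul_replicateRow hA,
    det_add_replicateCol_mul_replicateRow hA, replicateCol_smul, Matrix.mul_smul]
  simp only [det_unique, add_apply, smul_apply, one_apply_eq, smul_eq_mul]
  ring

theorem det_add_vecMulVec_add_det_sub_vecMulVec_of_det_ne_zero [IsDomain R] {A : Matrix m m R}
    (hA : A.det ≠ 0) (u v : m → R) :
    (A + vecMulVec u v).det + (A - vecMulVec u v).det = 2 * A.det := by
  let φ := algebraMap R (FractionRing R)
  have hφ : Function.Injective φ := IsFractionRing.injective R (FractionRing R)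
  have hvec : φ.mapMatrix (vecMulVec u v) = vecMulVec (φ ∘ u) (φ ∘ v) := by
    ext; simp [vecMulVec_apply]
  apply hφ
  rw [map_add, map_mul, map_ofNat, φ.map_det, φ.map_det, φ.map_det, map_add, map_sub, hvec]
  refine det_add_vecMulVec_add_det_sub_vecMulVec ?_ _ _
  rw [← φ.map_det]
  exact ((map_ne_zero_iff φ hφ).mpr hA).isUnit

end Matrix

def skewOnes (R : Type*) [Ring R] (n : ℕ) : Matrix (Fin n) (Fin n) R :=
  of fun i j => (if j ≤ i then 1 else 0) - (if i ≤ j then 1 else 0)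

section SkewOnes

variable {R : Type*} [CommRing R]

theorem det_charmatrix_skewOnes_add_vecMulVec_one (n : ℕ) :
    (charmatrix (skewOnes R n) + vecMulVec 1 1).det = (X + 1) ^ n := by
  rw [det_of_isUpperTriangular]
  · simp [skewOnes]
  · intro i j (h : j < i)
    simp [skewOnes, h.ne', h.le, not_le.mpr h]

theorem det_charmatrix_skewOnes_sub_vecMulVec_one (n : ℕ) :
    (charmatrix (skewOnes R n) - vecMulVec 1 1).det = (X - 1) ^ n := by
  rw [det_of_isLowerTriangular]
  · simp [skewOnes]
  · intro i j (h : i < j)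
    simp [skewOnes, h.ne, h.le, not_le.mpr h]

theorem two_mul_charpoly_skewOnes [IsDomain R] (n : ℕ) :
    2 * (skewOnes R n).charpoly = (X + 1) ^ n + (X - 1) ^ n := by
  rw [← det_charmatrix_skewOnes_add_vecMulVec_one, ← det_charmatrix_skewOnes_sub_vecMulVec_one,
    det_add_vecMulVec_add_det_sub_vecMulVec_of_det_ne_zero (charpoly_monic _).ne_zero,
    Matrix.charpoly]

end SkewOnes

theorem stmt_2 (n : ℕ) :
    (Matrix.of (fun i j : Fin n =>
        (if j ≤ i then (1 : ℝ) else 0) - (if i ≤ j then (1 : ℝ) else 0))).charpoly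
      = C (1 / 2 : ℝ) * ((X + 1) ^ n + (X - 1) ^ n) := by
  change (skewOnes ℝ n).charpoly = _
  rw [← two_mul_charpoly_skewOnes, ← mul_assoc, ← map_ofNat C 2, ← C_mul]
  norm_num
end

section
/- The complex eigenvalues of the $n \times n$ matrix $T_n$ with entries $(T_n)_{ij} = \mathbb{1}_{i\ge j} - \mathbb{1}_{i\le j}$ are exactly the $n$ numbers $\frac{1+\exp(\pi i (2j-1)/n)}{1-\exp(\pi i (2j-1)/n)}$ for $j = 1, \ldots, n$, i.e., these are precisely the roots of its characteristic polynomial $((\lambda+1)^n + (\lambda-1)^n)/2$. -/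
/-!
If `x ≠ 1` and `x ^ n = -1`, the geometric vector `(x ^ i)ᵢ` is an eigenvector of `Tₙ`: row `i`
of `Tₙ` sums `x ^ j` over `j < i` and subtracts the sum over `j > i`, and with `x ^ n = -1` the
two geometric sums combine to `(x + 1) / (x - 1) * x ^ i`. Taking `x = ω⁻¹` for the `n` roots
`ω = ζ ^ (2k+1)` of `X ^ n + 1` (`ζ` a primitive `2n`-th root of unity) gives the `n` eigenvalues
`(1 + ω) / (1 - ω)`, which are distinct because the Cayley transform is injective; an `n × n`
matrix has no further eigenvalues.
-/
open Finset Matrix Polynomial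

theorem Fin.sum_univ_ite_le {M : Type*} [AddCommMonoid M] (n : ℕ) (i : Fin n) (f : ℕ → M) :
    ∑ j : Fin n, (if j ≤ i then f j else 0) = ∑ k ∈ Iic (i : ℕ), f k := by
  rw [← sum_filter, filter_ge_eq_Iic, ← Fin.map_valEmbedding_Iic, sum_map]
  rfl

theorem Fin.sum_univ_ite_ge {M : Type*} [AddCommMonoid M] (n : ℕ) (i : Fin n) (f : ℕ → M) :
    ∑ j : Fin n, (if i ≤ j then f j else 0) = ∑ k ∈ Ico (i : ℕ) n, f k := by
  rw [← sum_filter, filter_le_eq_Ici, ← Fin.map_valEmbedding_Ici, sum_map]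
  rfl

section Spectrum

variable {ι K : Type*} [Fintype ι] [DecidableEq ι] [Field K]

theorem Matrix.mem_spectrum_of_mulVec_eq_smul {A : Matrix ι ι K} {v : ι → K} {μ : K}
    (hv : v ≠ 0) (h : A *ᵥ v = μ • v) : μ ∈ spectrum K A := by
  rw [← spectrum_toLin']
  exact (Module.End.hasEigenvalue_of_hasEigenvector
    ⟨Module.End.mem_eigenspace_iff.mpr h, hv⟩).mem_spectrum

theorem Matrix.mem_spectrum_iff_mem_roots_charpoly {A : Matrix ι ι K} {μ : K} :
    μ ∈ spectrum K A ↔ μ ∈ A.charpoly.roots := by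
  rw [mem_spectrum_iff_isRoot_charpoly, mem_roots A.charpoly_monic.ne_zero]

theorem Matrix.spectrum_eq_range_of_injective {A : Matrix ι ι K} {f : ι → K}
    (hf : Function.Injective f) (hmem : ∀ i, f i ∈ spectrum K A) : spectrum K A = Set.range f := by
  set s : Finset K := univ.map ⟨f, hf⟩
  have hle : s.val ≤ A.charpoly.roots := (Multiset.le_iff_subset s.nodup).mpr fun μ hμ => by
    obtain ⟨i, -, rfl⟩ := mem_map.mp hμ
    exact mem_spectrum_iff_mem_roots_charpoly.mp (hmem i)
  have hroots : s.val = A.charpoly.roots := Multiset.eq_of_le_of_card_le hle <| by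
    calc Multiset.card A.charpoly.roots ≤ A.charpoly.natDegree := card_roots' _
      _ = s.card := by rw [charpoly_natDegree_eq_dim, card_map, card_univ]
  ext μ
  rw [mem_spectrum_iff_mem_roots_charpoly, ← hroots]
  simp [s]

end Spectrum

theorem eq_of_one_add_div_one_sub_eq {K : Type*} [Field K] {a b : K} (h2 : (2 : K) ≠ 0)
    (ha : a ≠ 1) (hb : b ≠ 1) (h : (1 + a) / (1 - a) = (1 + b) / (1 - b)) : a = b := by
  rw [div_eq_div_iff (sub_ne_zero.mpr ha.symm) (sub_ne_zero.mpr hb.symm)] at h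
  exact mul_left_cancel₀ h2 (by linear_combination h)

namespace IsPrimitiveRoot

variable {K : Type*} [Field K] {ζ : K} {n : ℕ}

theorem pow_half_eq_neg_one (hζ : IsPrimitiveRoot ζ (2 * n)) (hn : n ≠ 0) : ζ ^ n = -1 := by
  have hsq := hζ.pow_of_dvd hn (dvd_mul_left n 2)
  rw [Nat.mul_div_cancel _ (Nat.pos_of_ne_zero hn)] at hsq
  exact hsq.eq_neg_one_of_two_right

theorem pow_odd_ne_one (hζ : IsPrimitiveRoot ζ (2 * n)) (k : ℕ) : ζ ^ (2 * k + 1) ≠ 1 := by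
  rw [Ne, hζ.pow_eq_one_iff_dvd]
  intro h
  have h2 := (dvd_mul_right 2 n).trans h
  omega

theorem pow_odd_pow_eq_neg_one (hζ : IsPrimitiveRoot ζ (2 * n)) (hn : n ≠ 0) (k : ℕ) :
    (ζ ^ (2 * k + 1)) ^ n = -1 := by
  rw [← pow_mul, mul_comm, pow_mul, hζ.pow_half_eq_neg_one hn, (odd_two_mul_add_one k).neg_one_pow]

end IsPrimitiveRoot

def triangularSignMatrix (R : Type*) [Ring R] (n : ℕ) : Matrix (Fin n) (Fin n) R :=
  of fun i j => (if j ≤ i then 1 else 0) - (if i ≤ j then 1 else 0)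

section TriangularSign

variable {K : Type*} [Field K] {n : ℕ}

theorem triangularSignMatrix_mulVec_powers {x : K} (hx : x ≠ 1) (hxn : x ^ n = -1) :
    triangularSignMatrix K n *ᵥ (fun i => x ^ (i : ℕ)) =
      ((x + 1) / (x - 1)) • fun i : Fin n => x ^ (i : ℕ) := by
  ext i
  simp only [mulVec, dotProduct, triangularSignMatrix, of_apply, sub_mul, ite_mul, one_mul,
    zero_mul, sum_sub_distrib, Pi.smul_apply, smul_eq_mul]
  rw [Fin.sum_univ_ite_le n i (x ^ ·), Fin.sum_univ_ite_ge n i (x ^ ·), ← Nat.range_succ_eq_Iic,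
    geom_sum_eq hx, geom_sum_Ico hx i.is_le', hxn]
  field_simp
  ring

theorem one_add_div_one_sub_mem_spectrum_triangularSignMatrix {ω : K} (hn : n ≠ 0) (hω : ω ≠ 1)
    (hωn : ω ^ n = -1) : (1 + ω) / (1 - ω) ∈ spectrum K (triangularSignMatrix K n) := by
  have hω0 : ω ≠ 0 := by
    rintro rfl
    simp [zero_pow hn] at hωn
  have hv : (fun i : Fin n => ω⁻¹ ^ (i : ℕ)) ≠ 0 := fun h => by
    simpa using congrFun h ⟨0, Nat.pos_of_ne_zero hn⟩
  have heigen := triangularSignMatrix_mulVec_powers (inv_ne_one.mpr hω)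
    (by rw [inv_pow, hωn, inv_neg_one])
  convert mem_spectrum_of_mulVec_eq_smul hv heigen using 1
  have h1ω : 1 - ω ≠ 0 := sub_ne_zero.mpr hω.symm
  have hω1 : ω⁻¹ - 1 ≠ 0 := sub_ne_zero.mpr (inv_ne_one.mpr hω)
  field_simp

theorem spectrum_triangularSignMatrix {ζ : K} (hζ : IsPrimitiveRoot ζ (2 * n)) :
    spectrum K (triangularSignMatrix K n) =
      Set.range fun k : Fin n => (1 + ζ ^ (2 * (k : ℕ) + 1)) / (1 - ζ ^ (2 * (k : ℕ) + 1)) := by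
  refine spectrum_eq_range_of_injective (fun k l hkl => ?_) fun k =>
    one_add_div_one_sub_mem_spectrum_triangularSignMatrix k.pos.ne' (hζ.pow_odd_ne_one k)
      (hζ.pow_odd_pow_eq_neg_one k.pos.ne' k)
  have hn : n ≠ 0 := k.pos.ne'
  have h2 : (2 : K) ≠ 0 := fun h => hζ.pow_ne_one_of_pos_of_lt hn (by omega) <| by
    rw [hζ.pow_half_eq_neg_one hn]
    linear_combination -h
  have hexp := hζ.pow_inj (by omega) (by omega)
    (eq_of_one_add_div_one_sub_eq h2 (hζ.pow_odd_ne_one k) (hζ.pow_odd_ne_one l) hkl)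
  omega

end TriangularSign

theorem stmt_3 (n : ℕ) (hn : 1 ≤ n) :
    spectrum ℂ (Matrix.of (fun i j : Fin n =>
        (if j ≤ i then (1 : ℂ) else 0) - (if i ≤ j then (1 : ℂ) else 0)))
      = {μ : ℂ | ∃ j ∈ Finset.Icc 1 n,
          μ = (1 + Complex.exp (Real.pi * Complex.I * (2 * (j : ℂ) - 1) / (n : ℂ))) /
              (1 - Complex.exp (Real.pi * Complex.I * (2 * (j : ℂ) - 1) / (n : ℂ)))} := by
  have hζ := Complex.isPrimitiveRoot_exp (2 * n) (by omega)
  have hodd : ∀ k : ℕ, Complex.exp (2 * Real.pi * Complex.I / (2 * n : ℕ)) ^ (2 * k + 1) =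
      Complex.exp (Real.pi * Complex.I * (2 * ((k + 1 : ℕ) : ℂ) - 1) / (n : ℂ)) := by
    intro k
    rw [← Complex.exp_nat_mul]
    congr 1
    push_cast
    field_simp
    ring
  show spectrum ℂ (triangularSignMatrix ℂ n) = _
  rw [spectrum_triangularSignMatrix hζ]
  ext μ
  simp only [Set.mem_range, Set.mem_ofPred_eq, mem_Icc, hodd]
  constructor
  · rintro ⟨k, rfl⟩
    exact ⟨k + 1, by omega, rfl⟩
  · rintro ⟨j, hj, rfl⟩
    obtain ⟨k, rfl⟩ : ∃ k, j = k + 1 := ⟨j - 1, by omega⟩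
    exact ⟨⟨k, by omega⟩, rfl⟩
end

section
/- If $B = (b_1,\ldots,b_n)$ is drawn from the balanced sequence model (uniform over sequences in $[n]^n$ with $\sum_j b_j = n(n+1)/2$), then the frequency count vector $(\widetilde{b}_1,\ldots,\widetilde{b}_n)$ has the same distribution as $(P_1,\ldots,P_n)$ where $P_1,\ldots,P_n$ are independent $\mathrm{Pois}(1)$ random variables conditioned on the events $\sum_{j=1}^n P_j = n$ and $\sum_{j=1}^n j P_j = n(n+1)/2$. -/
open Finset

/-- Frequency counts: `freqB n b i` is the number of faces of the die `b` equal to the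
value `i + 1` (faces of a die take values in `{1, …, n}`, encoded as `Fin n`). -/
def freqB (n : ℕ) (b : Fin n → Fin n) : Fin n → ℕ :=
  fun i => (Finset.univ.filter (fun j => b j = i)).card

/-- A sequence is balanced if its face sum (faces being `(b j) + 1 ∈ {1, …, n}`)
is `n(n+1)/2`. -/
def isBalanced (n : ℕ) (b : Fin n → Fin n) : Prop :=
  ∑ j : Fin n, ((b j : ℕ) + 1) = n * (n + 1) / 2

/-- The conditioning event for the count vector: `∑ P_j = n` and `∑ j P_j = n(n+1)/2`. -/
def condE (n : ℕ) (v : Fin n → ℕ) : Prop :=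
  (∑ j : Fin n, v j = n) ∧ (∑ j : Fin n, ((j : ℕ) + 1) * v j = n * (n + 1) / 2)

/-- Product of `Pois(1)` point masses: `∏_j e⁻¹ / (v j)!`. -/
noncomputable def poisMass (n : ℕ) (v : Fin n → ℕ) : ℝ :=
  ∏ j : Fin n, Real.exp (-1) / (Nat.factorial (v j))

section aux
open scoped Classical

lemma freqB_eq_card (n : ℕ) (b : Fin n → Fin n) (i : Fin n) :
    freqB n b i = Fintype.card {j // b j = i} := by
  rw [freqB, Fintype.card_subtype]

lemma sum_freqB (n : ℕ) (b : Fin n → Fin n) : ∑ i, freqB n b i = n := by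
  have := Finset.card_eq_sum_card_fiberwise (f := b) (s := (univ : Finset (Fin n)))
    (t := univ) (fun x _ => mem_univ _)
  simpa [freqB] using this.symm

lemma sum_weighted_freqB (n : ℕ) (b : Fin n → Fin n) :
    ∑ j : Fin n, ((b j : ℕ) + 1) = ∑ i : Fin n, ((i : ℕ) + 1) * freqB n b i := by
  rw [← Finset.sum_fiberwise' (univ : Finset (Fin n)) b (fun i => ((i : ℕ) + 1))]
  exact Finset.sum_congr rfl fun i _ => by
    rw [Finset.sum_const, freqB, smul_eq_mul, mul_comm]

lemma balanced_iff (n : ℕ) (b : Fin n → Fin n) :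
    isBalanced n b ↔ ∑ i : Fin n, ((i : ℕ) + 1) * freqB n b i = n * (n + 1) / 2 := by
  rw [isBalanced, sum_weighted_freqB]

/-- fiber of `Sigma.fst` -/
def sigmaFstFiber {n : ℕ} (β : Fin n → Type*) (i : Fin n) :
    {p : Σ k, β k // p.1 = i} ≃ β i where
  toFun p := p.2 ▸ p.1.2
  invFun x := ⟨⟨i, x⟩, rfl⟩
  left_inv := by rintro ⟨⟨k, x⟩, rfl⟩; rfl
  right_inv x := rfl

lemma exists_freqB (n : ℕ) (v : Fin n → ℕ) (hv : ∑ i, v i = n) :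
    ∃ f : Fin n → Fin n, freqB n f = v := by
  have hcard : Fintype.card (Σ i : Fin n, Fin (v i)) = Fintype.card (Fin n) := by
    simp [hv]
  let e := Fintype.equivOfCardEq hcard
  refine ⟨fun j => (e.symm j).1, ?_⟩
  funext i
  rw [freqB_eq_card]
  have e1 : {j : Fin n // (e.symm j).1 = i} ≃ {p : Σ k : Fin n, Fin (v k) // p.1 = i} :=
    Equiv.subtypeEquiv e.symm (fun j => Iff.rfl)
  rw [Fintype.card_congr (e1.trans (sigmaFstFiber _ i)), Fintype.card_fin]

lemma card_freqB_eq (n : ℕ) (v : Fin n → ℕ) (hv : ∑ i, v i = n) :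
    (univ.filter (fun b : Fin n → Fin n => freqB n b = v)).card * ∏ i, (v i).factorial
      = n.factorial := by
  obtain ⟨f₀, hf₀⟩ := exists_freqB n v hv
  -- every composition has the right frequencies
  have hcomp : ∀ σ : Equiv.Perm (Fin n), freqB n (f₀ ∘ σ) = v := by
    intro σ
    funext i
    rw [freqB_eq_card]
    have : {j : Fin n // f₀ (σ j) = i} ≃ {k : Fin n // f₀ k = i} :=
      Equiv.subtypeEquiv σ (fun j => Iff.rfl)
    rw [show Fintype.card {j // (f₀ ∘ σ) j = i} = Fintype.card {j // f₀ (σ j) = i} from rfl,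
      Fintype.card_congr this, ← freqB_eq_card, hf₀]
  -- each fiber over b with freq b = v has cardinality ∏ (v i)!
  have hfiber : ∀ b : Fin n → Fin n, freqB n b = v →
      (univ.filter (fun σ : Equiv.Perm (Fin n) => f₀ ∘ σ = b)).card
        = ∏ i, (v i).factorial := by
    intro b hb
    -- there is a permutation carrying f₀ to b
    have hpre : ∀ c : Fin n, (f₀ ⁻¹' {c} : Set (Fin n)) ≃ (b ⁻¹' {c} : Set (Fin n)) := by
      intro c
      apply Fintype.equivOfCardEq
      have h1 : Fintype.card (f₀ ⁻¹' {c} : Set (Fin n)) = freqB n f₀ c := by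
        rw [freqB_eq_card]
        exact Fintype.card_congr (Equiv.subtypeEquivRight (by simp))
      have h2 : Fintype.card (b ⁻¹' {c} : Set (Fin n)) = freqB n b c := by
        rw [freqB_eq_card]
        exact Fintype.card_congr (Equiv.subtypeEquivRight (by simp))
      rw [h1, h2, hf₀, hb]
    set E := Equiv.ofPreimageEquiv hpre with hEdef
    have hE : ∀ a, b (E a) = f₀ a := Equiv.ofPreimageEquiv_map hpre
    -- {σ | f₀ ∘ σ = b} ≃ {g | f₀ ∘ g = f₀}
    have e2 : {σ : Equiv.Perm (Fin n) // f₀ ∘ σ = b} ≃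
        {g : Equiv.Perm (Fin n) // f₀ ∘ g = f₀} := by
      refine Equiv.subtypeEquiv (Equiv.mulRight E) (fun σ => ?_)
      constructor
      · intro h
        funext x
        have := congrFun h (E x)
        simpa [hE x] using this
      · intro h
        funext x
        have := congrFun h (E.symm x)
        simp only [Function.comp_apply, Equiv.coe_mulRight, Equiv.Perm.mul_apply,
          Equiv.apply_symm_apply] at this ⊢
        rw [this, ← hE (E.symm x), Equiv.apply_symm_apply]
    rw [← Fintype.card_subtype, Fintype.card_congr e2, DomMulAct.stabilizer_card]
    exact Finset.prod_congr rfl fun i _ => by rw [← freqB_eq_card, hf₀]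
  -- orbit decomposition
  have hmaps : ∀ σ : Equiv.Perm (Fin n), σ ∈ (univ : Finset (Equiv.Perm (Fin n))) →
      f₀ ∘ σ ∈ univ.filter (fun b : Fin n → Fin n => freqB n b = v) := by
    intro σ _
    simp [hcomp σ]
  have hkey := Finset.card_eq_sum_card_fiberwise hmaps
  rw [Finset.card_univ, Fintype.card_perm, Fintype.card_fin] at hkey
  have hconst : ∑ b ∈ univ.filter (fun b : Fin n → Fin n => freqB n b = v),
      (univ.filter (fun σ : Equiv.Perm (Fin n) => f₀ ∘ σ = b)).card
      = (univ.filter (fun b : Fin n → Fin n => freqB n b = v)).card * ∏ i, (v i).factorial :=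
    Finset.sum_const_nat (fun b hb => hfiber b (Finset.mem_filter.mp hb).2)
  rw [← hconst, ← hkey]
end aux

section final
open scoped Classical

noncomputable def condSet (n : ℕ) : Finset (Fin n → ℕ) :=
  (Finset.Nat.antidiagonalTuple n n).filter (condE n)

lemma mem_condSet {n : ℕ} {w : Fin n → ℕ} : w ∈ condSet n ↔ condE n w := by
  simp only [condSet, Finset.mem_filter, Finset.Nat.mem_antidiagonalTuple]
  exact ⟨fun h => h.2, fun h => ⟨h.1, h⟩⟩

lemma balanced_freq_filter {n : ℕ} {w : Fin n → ℕ} (hw : condE n w) :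
    ((univ : Finset (Fin n → Fin n)).filter (fun b => isBalanced n b ∧ freqB n b = w))
      = univ.filter (fun b => freqB n b = w) := by
  ext b
  simp only [Finset.mem_filter, Finset.mem_univ, true_and]
  refine ⟨fun h => h.2, fun h => ⟨?_, h⟩⟩
  rw [balanced_iff, h]
  exact hw.2

lemma card_balanced (n : ℕ) :
    ((univ : Finset (Fin n → Fin n)).filter (fun b => isBalanced n b)).card
      = ∑ w ∈ condSet n, (univ.filter (fun b : Fin n → Fin n => freqB n b = w)).card := by
  have hmaps : ∀ b : Fin n → Fin n,
      b ∈ (univ : Finset (Fin n → Fin n)).filter (fun b => isBalanced n b) →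
      freqB n b ∈ condSet n := by
    intro b hb
    rw [mem_condSet]
    exact ⟨sum_freqB n b, by
      rw [← sum_weighted_freqB]
      exact (Finset.mem_filter.mp hb).2⟩
  rw [Finset.card_eq_sum_card_fiberwise hmaps]
  refine Finset.sum_congr rfl fun w hw => ?_
  rw [Finset.filter_filter, ← balanced_freq_filter (mem_condSet.mp hw)]

lemma poisMass_eq {n : ℕ} {w : Fin n → ℕ} (hw : ∑ i, w i = n) :
    poisMass n w = (Real.exp (-1)) ^ n / n.factorial
      * ((univ.filter (fun b : Fin n → Fin n => freqB n b = w)).card : ℝ) := by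
  have hN := card_freqB_eq n w hw
  have hNr : ((univ.filter (fun b : Fin n → Fin n => freqB n b = w)).card : ℝ)
      * ∏ i, ((w i).factorial : ℝ) = (n.factorial : ℝ) := by
    exact_mod_cast congrArg (Nat.cast : ℕ → ℝ) hN
  have hprod : (∏ i, ((w i).factorial : ℝ)) ≠ 0 := by
    apply Finset.prod_ne_zero_iff.mpr
    intro i _
    exact_mod_cast (Nat.factorial_pos _).ne'
  have hfact : (n.factorial : ℝ) ≠ 0 := by exact_mod_cast (Nat.factorial_pos _).ne'
  have hpm : poisMass n w = (Real.exp (-1)) ^ n / ∏ i, ((w i).factorial : ℝ) := by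
    rw [poisMass, Finset.prod_div_distrib, Finset.prod_const, Finset.card_univ,
      Fintype.card_fin]
  rw [hpm]
  field_simp
  rw [← hNr]
  ring
end final

open scoped Classical in
/-- The frequency count vector of a uniformly random balanced sequence has the law of
independent `Pois(1)` variables conditioned on `∑ P_j = n` and `∑ j P_j = n(n+1)/2`. -/
theorem stmt_5 (n : ℕ) (hn : 1 ≤ n) (v : Fin n → ℕ) :
    ((Finset.univ.filter
        (fun b : Fin n → Fin n => isBalanced n b ∧ freqB n b = v)).card : ℝ) /
      ((Finset.univ.filter (fun b : Fin n → Fin n => isBalanced n b)).card : ℝ)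
    = (if condE n v then poisMass n v else 0) /
        (∑' w : Fin n → ℕ, if condE n w then poisMass n w else 0) := by
  set c : ℝ := (Real.exp (-1)) ^ n / n.factorial with hc
  have hcne : c ≠ 0 := by
    apply div_ne_zero
    · positivity
    · exact_mod_cast (Nat.factorial_pos _).ne'
  have hnum : ((univ.filter (fun b : Fin n → Fin n => isBalanced n b ∧ freqB n b = v)).card : ℝ)
      = if condE n v then
          ((univ.filter (fun b : Fin n → Fin n => freqB n b = v)).card : ℝ) else 0 := by
    by_cases h : condE n v
    · rw [if_pos h, balanced_freq_filter h]
    · rw [if_neg h]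
      norm_cast
      rw [Finset.card_eq_zero]
      ext b
      simp only [Finset.mem_filter, Finset.mem_univ, true_and, Finset.notMem_empty, iff_false,
        not_and]
      intro hb1 hb2
      exact h ⟨by rw [← hb2]; exact sum_freqB n b,
        by rw [← hb2]; exact (balanced_iff n b).mp hb1⟩
  have hifp : (if condE n v then poisMass n v else 0)
      = c * (if condE n v then
          ((univ.filter (fun b : Fin n → Fin n => freqB n b = v)).card : ℝ) else 0) := by
    by_cases h : condE n v
    · rw [if_pos h, if_pos h, poisMass_eq h.1]
    · simp [h]
  have htsum : (∑' w : Fin n → ℕ, if condE n w then poisMass n w else 0)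
      = c * ∑ w ∈ condSet n,
          ((univ.filter (fun b : Fin n → Fin n => freqB n b = w)).card : ℝ) := by
    rw [tsum_eq_sum (s := condSet n)
        (fun w hw => by rw [if_neg (fun h => hw (mem_condSet.mpr h))]), Finset.mul_sum]
    refine Finset.sum_congr rfl fun w hw => ?_
    rw [if_pos (mem_condSet.mp hw), poisMass_eq (mem_condSet.mp hw).1]
  rw [hnum, hifp, htsum, card_balanced n]
  push_cast
  rw [mul_div_mul_left _ _ hcne]
end

section
/- Fix $\beta \in [1,2]$. There exists a constant $C(\beta) > 0$ such that for all $n$ and all independent real random variables $X_1,\ldots,X_n$ with $\mathbb{E}[X_i] = 0$ and $\mathbb{E}[|X_i|^\beta] < \infty$, we have $\mathbb{E}\big[\big|\sum_{i=1}^n X_i\big|^\beta\big] \le C(\beta) \sum_{i=1}^n \mathbb{E}[|X_i|^\beta]$. -/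
/-!
With `φ x = |x| ^ p` and `φ' x = p * |x| ^ p / x`, the elementary inequality
`φ (a + b) ≤ φ a + φ' a * b + (p + 1) * φ b` holds for `1 ≤ p ≤ 2`: after scaling `a` to `1`,
it follows from the tangent-line inequality for the convex function `x ^ p` and the
`(p - 1)`-Hölder continuity of `x ^ (p - 1)`. Apply it with `a = X₁ + ⋯ + Xₖ₋₁` and `b = Xₖ`:
in expectation the middle term vanishes, because `φ' a` is independent of the centred `Xₖ`.
Induction on `k` gives the inequality with `C = p + 1`.
-/

open MeasureTheory ProbabilityTheory

namespace Real

variable {p : ℝ}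

lemma abs_rpow_sub_rpow_le {x y : ℝ} (hp0 : 0 ≤ p) (hp1 : p ≤ 1) (hx : 0 ≤ x)
    (hy : 0 ≤ y) :
    |x ^ p - y ^ p| ≤ |x - y| ^ p := by
  wlog hyx : y ≤ x generalizing x y
  · rw [abs_sub_comm, abs_sub_comm x]
    exact this hy hx (le_of_not_ge hyx)
  have hsub : x ^ p ≤ y ^ p + (x - y) ^ p := by
    simpa using rpow_add_le_add_rpow hy (sub_nonneg.2 hyx) hp0 hp1
  rw [abs_of_nonneg (sub_nonneg.2 hyx),
    abs_of_nonneg (sub_nonneg.2 (rpow_le_rpow hy hyx hp0))]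
  linarith

lemma rpow_add_mul_rpow_sub_one_mul_sub_le {u v : ℝ} (hp : 1 ≤ p) (hu : 0 ≤ u) (hv : 0 < v) :
    v ^ p + p * v ^ (p - 1) * (u - v) ≤ u ^ p := by
  have hbernoulli := one_add_mul_self_le_rpow_one_add (s := u / v - 1) (by
    have := div_nonneg hu hv.le; linarith) hp
  have hvp : v ^ p = v ^ (p - 1) * v := by
    rw [← rpow_add_one' hv.le (by linarith), sub_add_cancel]
  have hscale := mul_le_mul_of_nonneg_left hbernoulli (rpow_nonneg hv.le p)
  rw [add_sub_cancel, ← mul_rpow hv.le (div_nonneg hu hv.le), mul_div_cancel₀ _ hv.ne']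
    at hscale
  calc v ^ p + p * v ^ (p - 1) * (u - v) = v ^ p * (1 + p * (u / v - 1)) := by
        rw [hvp]; field_simp
    _ ≤ u ^ p := hscale

lemma one_add_rpow_le {t : ℝ} (hp1 : 1 ≤ p) (hp2 : p ≤ 2) (ht : -1 ≤ t) :
    (1 + t) ^ p ≤ 1 + p * t + p * |t| ^ p := by
  rcases ht.eq_or_lt with rfl | ht
  · norm_num [zero_rpow (by linarith : p ≠ 0)]
  have hy : 0 < 1 + t := by linarith
  have htangent := rpow_add_mul_rpow_sub_one_mul_sub_le hp1 zero_le_one hy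
  have hholder :=
    abs_rpow_sub_rpow_le (p := p - 1) (by linarith) (by linarith) hy.le zero_le_one
  rw [one_rpow, add_sub_cancel_left] at hholder
  have htp : |t| ^ (p - 1) * |t| = |t| ^ p := by
    rw [← rpow_add_one' (abs_nonneg t) (by linarith), sub_add_cancel]
  have hcross : ((1 + t) ^ (p - 1) - 1) * t ≤ |t| ^ p := by
    calc ((1 + t) ^ (p - 1) - 1) * t ≤ |((1 + t) ^ (p - 1) - 1) * t| := le_abs_self _
      _ = |(1 + t) ^ (p - 1) - 1| * |t| := abs_mul _ _
      _ ≤ |t| ^ (p - 1) * |t| := by gcongr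
      _ = |t| ^ p := htp
  rw [one_rpow] at htangent
  nlinarith

lemma abs_one_add_rpow_le (hp1 : 1 ≤ p) (hp2 : p ≤ 2) (t : ℝ) :
    |1 + t| ^ p ≤ 1 + p * t + (p + 1) * |t| ^ p := by
  have htp : 0 ≤ |t| ^ p := rpow_nonneg (abs_nonneg t) p
  rcases le_or_gt (-1) t with ht | ht
  · rw [abs_of_nonneg (by linarith)]
    nlinarith [one_add_rpow_le hp1 hp2 ht]
  · have habs : |1 + t| ≤ |t| := by
      rw [abs_of_neg (by linarith), abs_of_neg (by linarith)]; linarith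
    have hself : |t| ≤ |t| ^ p := by
      simpa using
        rpow_le_rpow_of_exponent_le (by rw [abs_of_neg (by linarith)]; linarith) hp1
    have hmono : |1 + t| ^ p ≤ |t| ^ p := rpow_le_rpow (abs_nonneg _) habs (by linarith)
    rw [abs_of_neg (by linarith : t < 0)] at hself htp hmono ⊢
    nlinarith

-- `p * |a| ^ p / a` is the derivative of `|x| ^ p` at `a ≠ 0`; at `a = 0` it is `0`, since
-- `x / 0 = 0`.
lemma abs_add_rpow_le (hp1 : 1 ≤ p) (hp2 : p ≤ 2) (a b : ℝ) :
    |a + b| ^ p ≤ |a| ^ p + p * |a| ^ p / a * b + (p + 1) * |b| ^ p := by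
  rcases eq_or_ne a 0 with rfl | ha
  · have := rpow_nonneg (abs_nonneg b) p
    simp [zero_rpow (by linarith : p ≠ 0)]
    nlinarith
  have hscale := mul_le_mul_of_nonneg_left (abs_one_add_rpow_le hp1 hp2 (b / a))
    (rpow_nonneg (abs_nonneg a) p)
  have hap : 0 < |a| ^ p := rpow_pos_of_pos (abs_pos.2 ha) p
  rw [← mul_rpow (abs_nonneg a) (abs_nonneg _), ← abs_mul, mul_add, mul_one,
    mul_div_cancel₀ _ ha, abs_div, div_rpow (abs_nonneg b) (abs_nonneg a)] at hscale
  calc |a + b| ^ p ≤ |a| ^ p * (1 + p * (b / a) + (p + 1) * (|b| ^ p / |a| ^ p)) := hscale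
    _ = |a| ^ p + p * |a| ^ p / a * b + (p + 1) * |b| ^ p := by field_simp

lemma norm_mul_abs_rpow_div_le (hp : 1 ≤ p) (a : ℝ) :
    ‖p * |a| ^ p / a‖ ≤ p * (1 + |a| ^ p) := by
  have hap := rpow_nonneg (abs_nonneg a) p
  have hquot : |a| ^ p / |a| ≤ 1 + |a| ^ p := by
    rcases le_or_gt |a| 1 with ha | ha
    · have : |a| ^ p ≤ |a| := by
        simpa using rpow_le_rpow_of_exponent_ge' (abs_nonneg a) ha zero_le_one hp
      linarith [div_le_one_of_le₀ this (abs_nonneg a)]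
    · linarith [div_le_self hap ha.le]
  rw [norm_div, norm_mul, norm_eq_abs, norm_eq_abs, norm_eq_abs,
    abs_of_nonneg (by linarith : 0 ≤ p), abs_of_nonneg hap, mul_div_assoc]
  gcongr

end Real

section Probability

variable {Ω : Type*} [MeasurableSpace Ω] {μ : Measure Ω} {p : ℝ}

lemma integrable_abs_rpow_iff_memLp {f : Ω → ℝ} (hp : 0 < p) (hf : AEStronglyMeasurable f μ) :
    Integrable (fun ω => |f ω| ^ p) μ ↔ MemLp f (ENNReal.ofReal p) μ := by
  rw [← integrable_norm_rpow_iff hf (by simpa using hp) ENNReal.ofReal_ne_top,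
    ENNReal.toReal_ofReal hp.le]
  rfl

lemma integral_abs_add_rpow_le_of_indepFun [IsFiniteMeasure μ] (hp1 : 1 ≤ p) (hp2 : p ≤ 2)
    {S X : Ω → ℝ} (hSX : IndepFun S X μ) (hS : AEMeasurable S μ)
    (hSp : Integrable (fun ω => |S ω| ^ p) μ) (hX : Integrable X μ) (hX0 : ∫ ω, X ω ∂μ = 0)
    (hXp : Integrable (fun ω => |X ω| ^ p) μ) :
    ∫ ω, |S ω + X ω| ^ p ∂μ ≤ ∫ ω, |S ω| ^ p ∂μ + (p + 1) * ∫ ω, |X ω| ^ p ∂μ := by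
  set G : Ω → ℝ := fun ω => p * |S ω| ^ p / S ω
  have hGmeas : Measurable fun x : ℝ => p * |x| ^ p / x := by fun_prop
  have hG : Integrable G μ :=
    (((integrable_const 1).add hSp).const_mul p).mono'
      (hGmeas.comp_aemeasurable hS).aestronglyMeasurable
      (ae_of_all _ fun ω => Real.norm_mul_abs_rpow_div_le hp1 (S ω))
  have hGX : IndepFun G X μ := hSX.comp hGmeas measurable_id
  have hGX0 : ∫ ω, G ω * X ω ∂μ = 0 := by
    rw [← Pi.mul_def, hGX.integral_mul_eq_mul_integral hG.aestronglyMeasurable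
      hX.aestronglyMeasurable, hX0, mul_zero]
  have hGXint : Integrable (fun ω => G ω * X ω) μ := hGX.integrable_mul hG hX
  have hSGX : Integrable (fun ω => |S ω| ^ p + G ω * X ω) μ := hSp.add hGXint
  have hbound : Integrable (fun ω => |S ω| ^ p + G ω * X ω + (p + 1) * |X ω| ^ p) μ :=
    hSGX.add (hXp.const_mul _)
  calc ∫ ω, |S ω + X ω| ^ p ∂μ
      ≤ ∫ ω, (|S ω| ^ p + G ω * X ω + (p + 1) * |X ω| ^ p) ∂μ :=
        integral_mono_of_nonneg (ae_of_all _ fun ω => Real.rpow_nonneg (abs_nonneg _) p) hbound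
          (ae_of_all _ fun ω => Real.abs_add_rpow_le hp1 hp2 (S ω) (X ω))
    _ = ∫ ω, |S ω| ^ p ∂μ + (p + 1) * ∫ ω, |X ω| ^ p ∂μ := by
        rw [integral_add hSGX (hXp.const_mul _), integral_add hSp hGXint, hGX0,
          integral_const_mul, add_zero]

lemma integral_abs_sum_rpow_le_of_iIndepFun [IsFiniteMeasure μ] {ι : Type*} (hp1 : 1 ≤ p)
    (hp2 : p ≤ 2) {X : ι → Ω → ℝ} (hindep : iIndepFun X μ) (hmeas : ∀ i, Measurable (X i))
    (hint : ∀ i, Integrable (X i) μ) (hmean : ∀ i, ∫ ω, X i ω ∂μ = 0)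
    (hmom : ∀ i, Integrable (fun ω => |X i ω| ^ p) μ) (s : Finset ι) :
    ∫ ω, |∑ i ∈ s, X i ω| ^ p ∂μ ≤ (p + 1) * ∑ i ∈ s, ∫ ω, |X i ω| ^ p ∂μ := by
  classical
  have hp : 0 < p := by linarith
  induction s using Finset.induction_on with
  | empty => simp [Real.zero_rpow hp.ne']
  | insert i s hi ih =>
    have hS : Measurable fun ω => ∑ j ∈ s, X j ω :=
      Finset.measurable_fun_sum s fun j _ => hmeas j
    have hSX : IndepFun (fun ω => ∑ j ∈ s, X j ω) (X i) μ := by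
      simpa only [Finset.sum_fn] using hindep.indepFun_finsetSum_of_notMem hmeas hi
    have hSp : Integrable (fun ω => |∑ j ∈ s, X j ω| ^ p) μ :=
      (integrable_abs_rpow_iff_memLp hp hS.aestronglyMeasurable).2 <|
        memLp_finsetSum s fun j _ =>
          (integrable_abs_rpow_iff_memLp hp (hmeas j).aestronglyMeasurable).1 (hmom j)
    have hstep := integral_abs_add_rpow_le_of_indepFun hp1 hp2 hSX hS.aemeasurable hSp (hint i)
      (hmean i) (hmom i)
    simp only [Finset.sum_insert hi, add_comm (X i _)]
    linarith

end Probability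

/-- The von Bahr–Esseen inequality. -/
theorem stmt_10 (β : ℝ) (hβ : β ∈ Set.Icc (1 : ℝ) 2) :
    ∃ C : ℝ, 0 < C ∧
      ∀ (Ω : Type) (_ : MeasurableSpace Ω) (μ : Measure Ω) (_ : IsProbabilityMeasure μ)
        (n : ℕ) (X : Fin n → Ω → ℝ),
        iIndepFun X μ →
        (∀ i, Measurable (X i)) →
        (∀ i, Integrable (X i) μ) →
        (∀ i, ∫ ω, X i ω ∂μ = 0) →
        (∀ i, Integrable (fun ω => |X i ω| ^ β) μ) →
        (∫ ω, |∑ i, X i ω| ^ β ∂μ) ≤ C * ∑ i, ∫ ω, |X i ω| ^ β ∂μ := by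
  refine ⟨β + 1, by linarith [hβ.1], fun Ω _ μ _ n X hindep hmeas hint hmean hmom => ?_⟩
  exact integral_abs_sum_rpow_le_of_iIndepFun hβ.1 hβ.2 hindep hmeas hint hmean hmom Finset.univ
end

section
/- There is an absolute constant $C > 0$ such that the following holds. Let $x_1,\ldots,x_n$ be real numbers and let $i_1,\ldots,i_M$ be independent indices each uniform on $[n]$. Then with probability at least $1 - M^{-1/8}$, $\Big|\frac{1}{M}\sum_{j=1}^M x_{i_j} - \frac{1}{n}\sum_{j=1}^n x_j\Big| \le C M^{-1/4}\Big(\frac{1}{n}\sum_{j=1}^n |x_j|^{3/2}\Big)^{2/3}.$ -/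
/-!
Instead of the von Bahr–Esseen inequality we truncate: with `m` the mean of `|x|^{3/2}` and
`τ² = M^{3/4} m^{2/3}`, split `x = y + z` where `y` is `x` on `{|x| ≤ τ²}` and `z` the tail.
Pointwise `y² ≤ τ |x|^{3/2}` and `|z| ≤ τ⁻¹ |x|^{3/2}`, so Chebyshev bounds the deviation of the
sample sum of `y`, and Markov the sample sum of `|z|`, by `2τ²` outside sets of probability
`M^{-1/8}/4` and `M^{-1/8}/2`. Dividing by `M`, and adding the mean of `|z|`, gives a deviation
of at most `5 M^{-1/4} m^{2/3}`.
-/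

open Finset

section SumsOverFunctions

variable {ι α R : Type*} [Fintype ι] [DecidableEq ι] [Fintype α]

theorem sum_comp_eval [AddCommMonoid R] (j : ι) (h : α → R) :
    ∑ f : ι → α, h (f j) = Fintype.card α ^ (Fintype.card ι - 1) • ∑ a, h a := by
  rw [← (Equiv.funSplitAt j α).symm.sum_comp, Fintype.sum_prod_type]
  simp [Fintype.card_subtype_compl, sum_nsmul]

theorem sum_mul_comp_eval_eq_zero [NonUnitalNonAssocSemiring R] {j k : ι} (hjk : j ≠ k)
    {w : α → R} (hw : ∑ a, w a = 0) (v : α → R) :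
    ∑ f : ι → α, w (f j) * v (f k) = 0 := by
  rw [← (Equiv.funSplitAt j α).symm.sum_comp, Fintype.sum_prod_type]
  simp [hjk.symm, ← mul_sum, ← sum_mul, hw]

theorem sum_sq_sum_comp_of_sum_eq_zero [CommSemiring R] {w : α → R} (hw : ∑ a, w a = 0) :
    ∑ f : ι → α, (∑ i, w (f i)) ^ 2 =
      Fintype.card ι * Fintype.card α ^ (Fintype.card ι - 1) * ∑ a, w a ^ 2 := by
  calc ∑ f : ι → α, (∑ i, w (f i)) ^ 2
      = ∑ i, ∑ k, ∑ f : ι → α, w (f i) * w (f k) := by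
        simp_rw [sq, sum_mul_sum]
        rw [sum_comm]
        exact sum_congr rfl fun _ _ => sum_comm
    _ = ∑ i, ∑ f : ι → α, w (f i) ^ 2 := by
        refine sum_congr rfl fun i _ => ?_
        rw [sum_eq_single i (fun k _ hki => sum_mul_comp_eval_eq_zero (Ne.symm hki) hw w)
          (by simp)]
        simp_rw [sq]
    _ = _ := by
        rw [sum_congr rfl fun i _ => sum_comp_eval i fun a => w a ^ 2]
        simp [nsmul_eq_mul, mul_assoc]

end SumsOverFunctions

theorem card_filter_lt_mul_le_sum {β : Type*} {s : Finset β} {g : β → ℝ}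
    (hg : ∀ b ∈ s, 0 ≤ g b) (t : ℝ) : #{b ∈ s | t < g b} * t ≤ ∑ b ∈ s, g b :=
  calc #{b ∈ s | t < g b} * t ≤ ∑ b ∈ s with t < g b, g b := by
        simpa using card_nsmul_le_sum _ g t fun b hb => (mem_filter.1 hb).2.le
    _ ≤ ∑ b ∈ s, g b := sum_le_sum_of_subset_of_nonneg (filter_subset _ _) fun b hb _ => hg b hb

theorem card_le_card_filter_add_card_filter_add_card_filter {β : Type*} {s : Finset β}
    {p q r : β → Prop} [DecidablePred p] [DecidablePred q] [DecidablePred r]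
    (h : ∀ b ∈ s, p b ∨ q b ∨ r b) :
    #s ≤ #{b ∈ s | p b} + #{b ∈ s | q b} + #{b ∈ s | r b} := by
  classical
  calc #s ≤ #({b ∈ s | p b} ∪ {b ∈ s | q b} ∪ {b ∈ s | r b}) :=
        card_le_card fun b hb => by simpa [hb, or_assoc] using h b hb
    _ ≤ _ := (card_union_le _ _).trans (Nat.add_le_add_right (card_union_le _ _) _)

theorem sum_sq_sub_mean_le {α : Type*} [Fintype α] (y : α → ℝ) :
    ∑ a, (y a - 1 / Fintype.card α * ∑ b, y b) ^ 2 ≤ ∑ a, y a ^ 2 := by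
  rcases isEmpty_or_nonempty α with hα | hα
  · simp
  set c := 1 / (Fintype.card α : ℝ) * ∑ b, y b
  have hN : (Fintype.card α : ℝ) ≠ 0 := by simp
  have hsplit : ∑ a, (y a - c) ^ 2 = ∑ a, y a ^ 2 - Fintype.card α * c ^ 2 := by
    simp_rw [sub_sq, sum_add_distrib, sum_sub_distrib, ← sum_mul, ← mul_sum]
    simp only [one_div, sum_const, card_univ, nsmul_eq_mul, c]
    field_simp
    ring
  rw [hsplit]
  nlinarith [sq_nonneg c]

theorem rpow_three_halves {u : ℝ} (hu : 0 ≤ u) : u ^ (3 / 2 : ℝ) = u * √u := by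
  rw [Real.sqrt_eq_rpow, show (3 / 2 : ℝ) = 1 + 1 / 2 by norm_num,
    Real.rpow_add' hu (by norm_num), Real.rpow_one]

theorem sq_le_mul_rpow_of_abs_le {u τ : ℝ} (hτ : 0 ≤ τ) (h : |u| ≤ τ ^ 2) :
    u ^ 2 ≤ τ * |u| ^ (3 / 2 : ℝ) := by
  have hsqrt : √|u| ≤ τ := (Real.sqrt_le_left hτ).2 h
  calc u ^ 2 = |u| * √|u| * √|u| := by
        rw [mul_assoc, Real.mul_self_sqrt (abs_nonneg u), abs_mul_abs_self, sq]
    _ ≤ |u| * √|u| * τ := by gcongr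
    _ = τ * |u| ^ (3 / 2 : ℝ) := by rw [rpow_three_halves (abs_nonneg u), mul_comm]

theorem abs_le_inv_mul_rpow_of_lt_abs {u τ : ℝ} (hτ : 0 < τ) (h : τ ^ 2 < |u|) :
    |u| ≤ τ⁻¹ * |u| ^ (3 / 2 : ℝ) := by
  have hsqrt : τ ≤ √|u| := Real.le_sqrt_of_sq_le h.le
  rw [rpow_three_halves (abs_nonneg u), le_inv_mul_iff₀ hτ, mul_comm τ]
  exact mul_le_mul_of_nonneg_left hsqrt (abs_nonneg u)

section Truncation

variable {α : Type*}

noncomputable def lowPart (L : ℝ) (x : α → ℝ) : α → ℝ := {a | |x a| ≤ L}.indicator x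

noncomputable def highPart (L : ℝ) (x : α → ℝ) : α → ℝ := {a | |x a| ≤ L}ᶜ.indicator x

theorem lowPart_add_highPart (L : ℝ) (x : α → ℝ) : lowPart L x + highPart L x = x :=
  Set.indicator_self_add_compl _ _

theorem sum_sq_lowPart_le [Fintype α] (x : α → ℝ) {τ : ℝ} (hτ : 0 ≤ τ) :
    ∑ a, lowPart (τ ^ 2) x a ^ 2 ≤ τ * ∑ a, |x a| ^ (3 / 2 : ℝ) := by
  rw [mul_sum]
  refine sum_le_sum fun a _ => ?_
  by_cases h : |x a| ≤ τ ^ 2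
  · simpa [lowPart, h] using sq_le_mul_rpow_of_abs_le hτ h
  · simp only [lowPart, Set.indicator_of_notMem (show a ∉ {a | |x a| ≤ τ ^ 2} from h),
      zero_pow two_ne_zero]
    positivity

theorem sum_abs_highPart_le [Fintype α] (x : α → ℝ) {τ : ℝ} (hτ : 0 < τ) :
    ∑ a, |highPart (τ ^ 2) x a| ≤ τ⁻¹ * ∑ a, |x a| ^ (3 / 2 : ℝ) := by
  rw [mul_sum]
  refine sum_le_sum fun a _ => ?_
  by_cases h : |x a| ≤ τ ^ 2
  · simp only [highPart, abs_zero,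
      Set.indicator_of_notMem (show a ∉ {a | |x a| ≤ τ ^ 2}ᶜ from not_not.2 h)]
    positivity
  · simpa [highPart, h] using abs_le_inv_mul_rpow_of_lt_abs hτ (not_le.1 h)

end Truncation

section SampleMeans

variable {ι α : Type*} [Fintype ι] [Fintype α]

theorem card_mul_pow_card_sub_one_mul [DecidableEq ι] [Nonempty α] (X : ℝ) :
    Fintype.card ι * Fintype.card α ^ (Fintype.card ι - 1) * X =
      Fintype.card (ι → α) * (Fintype.card ι * (1 / Fintype.card α * X)) := by
  have hN : (Fintype.card α : ℝ) ≠ 0 := by simp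
  rcases Nat.eq_zero_or_pos (Fintype.card ι) with hM | hM
  · simp [hM]
  rw [Fintype.card_fun, Nat.cast_pow, ← pow_sub_one_mul hM.ne']
  field_simp

theorem card_filter_lt_abs_sum_comp_sub_mul_sq_le [DecidableEq ι] [Nonempty α] (y : α → ℝ)
    {t : ℝ} (ht : 0 ≤ t) :
    #{f : ι → α | t < |∑ i, y (f i) - Fintype.card ι * (1 / Fintype.card α * ∑ a, y a)|} *
        t ^ 2 ≤
      Fintype.card (ι → α) * (Fintype.card ι * (1 / Fintype.card α * ∑ a, y a ^ 2)) := by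
  set c := 1 / (Fintype.card α : ℝ) * ∑ a, y a
  have hw : ∑ a, (y a - c) = 0 := by simp [sum_sub_distrib, c]
  calc _ ≤ #{f : ι → α | t ^ 2 < (∑ i, (y (f i) - c)) ^ 2} * t ^ 2 := by
        refine mul_le_mul_of_nonneg_right ?_ (sq_nonneg t)
        refine mod_cast card_le_card (monotone_filter_right _ fun f _ h => ?_)
        simpa [sum_sub_distrib, ← sq_abs] using pow_lt_pow_left₀ h ht two_ne_zero
    _ ≤ ∑ f : ι → α, (∑ i, (y (f i) - c)) ^ 2 :=
        card_filter_lt_mul_le_sum (fun _ _ => sq_nonneg _) _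
    _ ≤ _ := by
        rw [sum_sq_sum_comp_of_sum_eq_zero hw, ← card_mul_pow_card_sub_one_mul]
        exact mul_le_mul_of_nonneg_left (sum_sq_sub_mean_le y) (by positivity)

theorem card_filter_lt_sum_comp_mul_le [DecidableEq ι] [Nonempty α] {g : α → ℝ}
    (hg : ∀ a, 0 ≤ g a) (t : ℝ) :
    #{f : ι → α | t < ∑ i, g (f i)} * t ≤
      Fintype.card (ι → α) * (Fintype.card ι * (1 / Fintype.card α * ∑ a, g a)) := by
  calc _ ≤ ∑ f : ι → α, ∑ i, g (f i) :=
        card_filter_lt_mul_le_sum (fun f _ => sum_nonneg fun i _ => hg (f i)) t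
    _ = _ := by
        rw [sum_comm, sum_congr rfl fun i _ => sum_comp_eval i g, ← card_mul_pow_card_sub_one_mul]
        simp [nsmul_eq_mul, mul_assoc]

theorem abs_sample_mean_sub_mean_le [Nonempty ι] (y z : α → ℝ) (f : ι → α) :
    |1 / Fintype.card ι * ∑ i, (y + z) (f i) - 1 / Fintype.card α * ∑ a, (y + z) a| ≤
      1 / Fintype.card ι * |∑ i, y (f i) - Fintype.card ι * (1 / Fintype.card α * ∑ a, y a)| +
        1 / Fintype.card ι * ∑ i, |z (f i)| + 1 / Fintype.card α * ∑ a, |z a| := by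
  have hM : (Fintype.card ι : ℝ) ≠ 0 := by simp
  have hsplit : 1 / Fintype.card ι * ∑ i, (y + z) (f i) - 1 / Fintype.card α * ∑ a, (y + z) a =
      1 / Fintype.card ι * (∑ i, y (f i) - Fintype.card ι * (1 / Fintype.card α * ∑ a, y a)) +
        1 / Fintype.card ι * ∑ i, z (f i) - 1 / Fintype.card α * ∑ a, z a := by
    simp only [Pi.add_apply, sum_add_distrib]
    field_simp
    ring
  rw [hsplit]
  refine (abs_sub _ _).trans (add_le_add ((abs_add_le _ _).trans (add_le_add ?_ ?_)) ?_) <;>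
    rw [abs_mul, abs_of_nonneg (by positivity)]
  all_goals gcongr; exact abs_sum_le_sum_abs _ _

theorem abs_sample_mean_sub_mean_le_of_le [Nonempty ι] (x : α → ℝ) {τ t : ℝ} (hτ : 0 < τ)
    {f : ι → α}
    (hlow : |∑ i, lowPart (τ ^ 2) x (f i) -
      Fintype.card ι * (1 / Fintype.card α * ∑ a, lowPart (τ ^ 2) x a)| ≤ t)
    (hhigh : ∑ i, |highPart (τ ^ 2) x (f i)| ≤ t) :
    |1 / Fintype.card ι * ∑ i, x (f i) - 1 / Fintype.card α * ∑ a, x a| ≤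
      2 * t / Fintype.card ι + τ⁻¹ * (1 / Fintype.card α * ∑ a, |x a| ^ (3 / 2 : ℝ)) := by
  have hsplit := abs_sample_mean_sub_mean_le (lowPart (τ ^ 2) x) (highPart (τ ^ 2) x) f
  rw [lowPart_add_highPart] at hsplit
  refine hsplit.trans ?_
  have hhigh' := sum_abs_highPart_le x hτ
  calc _ ≤ 1 / Fintype.card ι * t + 1 / Fintype.card ι * t +
        1 / Fintype.card α * (τ⁻¹ * ∑ a, |x a| ^ (3 / 2 : ℝ)) := by gcongr
    _ = _ := by ring

end SampleMeans

/- Writing `M = s⁸` and bounding the mean of `|x|^{3/2}` by `a³` makes every exponent integral;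
the truncation level is `(s³a)² = M^{3/4} a²`. -/

section Estimate

variable {ι α : Type*} [Fintype ι] [Fintype α] {x : α → ℝ} {s a : ℝ}

theorem card_filter_lt_abs_sum_lowPart_sub_mul_le [DecidableEq ι] [Nonempty α] (hs : 0 < s)
    (ha : 0 < a) (hM : (Fintype.card ι : ℝ) = s ^ 8)
    (hx : 1 / Fintype.card α * ∑ k, |x k| ^ (3 / 2 : ℝ) ≤ a ^ 3) :
    #{f : ι → α | 2 * (s ^ 3 * a) ^ 2 < |∑ i, lowPart ((s ^ 3 * a) ^ 2) x (f i) -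
        Fintype.card ι * (1 / Fintype.card α * ∑ k, lowPart ((s ^ 3 * a) ^ 2) x k)|} * (4 * s) ≤
      Fintype.card (ι → α) := by
  have hlow : 1 / Fintype.card α * ∑ k, lowPart ((s ^ 3 * a) ^ 2) x k ^ 2 ≤ s ^ 3 * a * a ^ 3 :=
    calc _ ≤ 1 / Fintype.card α * (s ^ 3 * a * ∑ k, |x k| ^ (3 / 2 : ℝ)) := by
          gcongr; exact sum_sq_lowPart_le x (by positivity)
      _ ≤ s ^ 3 * a * a ^ 3 := by rw [mul_left_comm]; gcongr
  refine le_of_mul_le_mul_right ((le_of_eq (by ring)).trans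
    ((card_filter_lt_abs_sum_comp_sub_mul_sq_le _ (by positivity)).trans ?_))
    (by positivity : (0 : ℝ) < s ^ 11 * a ^ 4)
  calc _ ≤ Fintype.card (ι → α) * (s ^ 8 * (s ^ 3 * a * a ^ 3)) := by rw [hM]; gcongr
    _ = _ := by ring

theorem card_filter_lt_sum_abs_highPart_mul_le [DecidableEq ι] [Nonempty α] (hs : 0 < s)
    (ha : 0 < a) (hM : (Fintype.card ι : ℝ) = s ^ 8)
    (hx : 1 / Fintype.card α * ∑ k, |x k| ^ (3 / 2 : ℝ) ≤ a ^ 3) :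
    #{f : ι → α | 2 * (s ^ 3 * a) ^ 2 < ∑ i, |highPart ((s ^ 3 * a) ^ 2) x (f i)|} * (2 * s) ≤
      Fintype.card (ι → α) := by
  have hhigh : 1 / Fintype.card α * ∑ k, |highPart ((s ^ 3 * a) ^ 2) x k| ≤
      (s ^ 3 * a)⁻¹ * a ^ 3 :=
    calc _ ≤ 1 / Fintype.card α * ((s ^ 3 * a)⁻¹ * ∑ k, |x k| ^ (3 / 2 : ℝ)) := by
          gcongr; exact sum_abs_highPart_le x (by positivity)
      _ ≤ (s ^ 3 * a)⁻¹ * a ^ 3 := by rw [mul_left_comm]; gcongr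
  refine le_of_mul_le_mul_right ((le_of_eq (by ring)).trans
    ((card_filter_lt_sum_comp_mul_le (g := fun k => |highPart ((s ^ 3 * a) ^ 2) x k|)
      (fun k => abs_nonneg _) (2 * (s ^ 3 * a) ^ 2)).trans ?_))
    (by positivity : (0 : ℝ) < s ^ 5 * a ^ 2)
  calc _ ≤ Fintype.card (ι → α) * (s ^ 8 * ((s ^ 3 * a)⁻¹ * a ^ 3)) := by rw [hM]; gcongr
    _ = _ := by field_simp

end Estimate

theorem card_filter_abs_sample_mean_sub_mean_le {ι α : Type*} [Fintype ι] [DecidableEq ι]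
    [Fintype α] [Nonempty α] (x : α → ℝ) {s a : ℝ} (hs : 1 ≤ s) (ha : 0 < a)
    (hM : (Fintype.card ι : ℝ) = s ^ 8)
    (hx : 1 / Fintype.card α * ∑ k, |x k| ^ (3 / 2 : ℝ) ≤ a ^ 3) :
    (1 - s⁻¹) * Fintype.card (ι → α) ≤
      #{f : ι → α | |1 / Fintype.card ι * ∑ i, x (f i) - 1 / Fintype.card α * ∑ k, x k| ≤
        5 * (s ^ 2)⁻¹ * a ^ 2} := by
  set M := Fintype.card ι
  set N := Fintype.card α
  set τ := s ^ 3 * a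
  have hs0 : 0 < s := one_pos.trans_le hs
  have hτ : 0 < τ := by positivity
  have : Nonempty ι := Fintype.card_pos_iff.1 <| Nat.pos_of_ne_zero <| by
    rw [← Nat.cast_ne_zero (R := ℝ), hM]; positivity
  have hdev : 2 * (2 * τ ^ 2) / M + τ⁻¹ * (1 / N * ∑ k, |x k| ^ (3 / 2 : ℝ)) ≤
      5 * (s ^ 2)⁻¹ * a ^ 2 :=
    calc _ ≤ 2 * (2 * τ ^ 2) / M + τ⁻¹ * a ^ 3 := by gcongr
      _ = (4 + s⁻¹) * (s ^ 2)⁻¹ * a ^ 2 := by rw [hM]; field_simp; ring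
      _ ≤ 5 * (s ^ 2)⁻¹ * a ^ 2 := by gcongr; linarith [inv_le_one_of_one_le₀ hs]
  have hcover := card_le_card_filter_add_card_filter_add_card_filter (s := (univ : Finset (ι → α)))
    (p := fun f => |1 / M * ∑ i, x (f i) - 1 / N * ∑ k, x k| ≤ 5 * (s ^ 2)⁻¹ * a ^ 2)
    (q := fun f => 2 * τ ^ 2 <
      |∑ i, lowPart (τ ^ 2) x (f i) - M * (1 / N * ∑ k, lowPart (τ ^ 2) x k)|)
    (r := fun f => 2 * τ ^ 2 < ∑ i, |highPart (τ ^ 2) x (f i)|) fun f _ => by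
      by_contra! hf
      exact hf.1.not_ge ((abs_sample_mean_sub_mean_le_of_le x hτ hf.2.1 hf.2.2).trans hdev)
  have hB₁ := card_filter_lt_abs_sum_lowPart_sub_mul_le (ι := ι) hs0 ha hM hx
  have hB₂ := card_filter_lt_sum_abs_highPart_mul_le (ι := ι) hs0 ha hM hx
  rw [card_univ] at hcover
  set G := #{f : ι → α | |1 / M * ∑ i, x (f i) - 1 / N * ∑ k, x k| ≤ 5 * (s ^ 2)⁻¹ * a ^ 2}
  set B₁ := #{f : ι → α | 2 * τ ^ 2 <
    |∑ i, lowPart (τ ^ 2) x (f i) - M * (1 / N * ∑ k, lowPart (τ ^ 2) x k)|}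
  set B₂ := #{f : ι → α | 2 * τ ^ 2 < ∑ i, |highPart (τ ^ 2) x (f i)|}
  set P := Fintype.card (ι → α)
  have hbad : (B₁ + B₂ : ℝ) ≤ s⁻¹ * P := by
    rw [le_inv_mul_iff₀ hs0]
    nlinarith [Nat.cast_nonneg (α := ℝ) B₁, Nat.cast_nonneg (α := ℝ) B₂]
  have hcover' : (P : ℝ) ≤ G + B₁ + B₂ := by exact_mod_cast hcover
  linarith

theorem eq_zero_of_sum_abs_rpow_eq_zero {α : Type*} [Fintype α] {x : α → ℝ} {p : ℝ} (hp : p ≠ 0)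
    (h : ∑ a, |x a| ^ p = 0) : x = 0 := by
  funext a
  simpa [Real.rpow_eq_zero_iff_of_nonneg, hp] using
    (sum_eq_zero_iff_of_nonneg fun a _ => by positivity).1 h a (mem_univ a)

theorem card_filter_abs_sample_mean_sub_mean_le_rpow {ι α : Type*} [Fintype ι] [DecidableEq ι]
    [Fintype α] [Nonempty α] (x : α → ℝ) (hM : 1 ≤ Fintype.card ι) :
    (1 - (Fintype.card ι : ℝ) ^ (-(1 / 8 : ℝ))) * Fintype.card (ι → α) ≤
      #{f : ι → α | |1 / Fintype.card ι * ∑ i, x (f i) - 1 / Fintype.card α * ∑ k, x k| ≤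
        5 * (Fintype.card ι : ℝ) ^ (-(1 / 4 : ℝ)) *
          (1 / Fintype.card α * ∑ k, |x k| ^ (3 / 2 : ℝ)) ^ (2 / 3 : ℝ)} := by
  set M := Fintype.card ι
  set m := 1 / (Fintype.card α : ℝ) * ∑ k, |x k| ^ (3 / 2 : ℝ)
  have hM0 : (0 : ℝ) ≤ M := Nat.cast_nonneg M
  obtain hm | hm := (show 0 ≤ m by positivity).eq_or_lt
  · obtain rfl : x = 0 := eq_zero_of_sum_abs_rpow_eq_zero (by norm_num)
      ((mul_eq_zero.1 hm.symm).resolve_left (by simp))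
    rw [filter_true_of_mem fun f _ => by simp [← hm], card_univ]
    exact mul_le_of_le_one_left (by positivity) (by simp [Real.rpow_nonneg])
  set s := (M : ℝ) ^ (1 / 8 : ℝ)
  set a := m ^ (1 / 3 : ℝ)
  have hMs : (M : ℝ) = s ^ 8 := by rw [← Real.rpow_natCast, ← Real.rpow_mul hM0]; norm_num
  have hma : m = a ^ 3 := by rw [← Real.rpow_natCast, ← Real.rpow_mul hm.le]; norm_num
  have h4 : (M : ℝ) ^ (-(1 / 4 : ℝ)) = (s ^ 2)⁻¹ := by
    rw [Real.rpow_neg hM0, ← Real.rpow_natCast, ← Real.rpow_mul hM0]; norm_num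
  have h23 : m ^ (2 / 3 : ℝ) = a ^ 2 := by
    rw [← Real.rpow_natCast, ← Real.rpow_mul hm.le]; norm_num
  rw [Real.rpow_neg hM0, h4, h23]
  exact card_filter_abs_sample_mean_sub_mean_le x
    (Real.one_le_rpow (by exact_mod_cast hM) (by norm_num)) (Real.rpow_pos_of_pos hm _) hMs hma.le

open scoped Classical in
/-- Sampling estimate: for i.i.d. uniform indices `i_1, …, i_M` (modeled by the uniform
measure on `Fin M → Fin n`), with probability at least `1 - M^{-1/8}` the sample mean of
`x` is within `C M^{-1/4} (n⁻¹ ∑ |x_j|^{3/2})^{2/3}` of the true mean. -/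
theorem stmt_11 :
    ∃ C : ℝ, 0 < C ∧ ∀ (n M : ℕ), 1 ≤ n → 1 ≤ M → ∀ x : Fin n → ℝ,
      (1 - (M : ℝ) ^ (-(1 / 8 : ℝ))) * (Fintype.card (Fin M → Fin n) : ℝ) ≤
        ((Finset.univ.filter (fun ι : Fin M → Fin n =>
          |(1 / (M : ℝ)) * ∑ j : Fin M, x (ι j) - (1 / (n : ℝ)) * ∑ j : Fin n, x j|
            ≤ C * (M : ℝ) ^ (-(1 / 4 : ℝ)) *
              ((1 / (n : ℝ)) * ∑ j : Fin n, |x j| ^ (3 / 2 : ℝ)) ^ (2 / 3 : ℝ))).card : ℝ) := by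
  refine ⟨5, by norm_num, fun n M hn hM x => ?_⟩
  have : Nonempty (Fin n) := ⟨⟨0, hn⟩⟩
  simpa using card_filter_abs_sample_mean_sub_mean_le_rpow (ι := Fin M) x (by simpa using hM)
end

section
/- Let $n \ge 2$ and let $M_n^\ast$ be the matrix of Definition below. Then for all $1 \le i,j \le n$, writing $x = (n+1-2i)/(n-1)$ and $y = (n+1-2j)/(n-1)$, one has $(M_n^\ast)_{ij} = \frac{\mathbb{1}_{x\ge y} - \mathbb{1}_{x\le y}}{2} - \frac{3(x-y)(1-1/n)}{4} - \frac{3xy(x-y)(n-1)^2}{4n(n+1)}$. In particular $M_n^\ast$ is skew-symmetric and its entries are bounded by an absolute constant independent of $n$. -/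
open Matrix

/-- `v₁ ∈ ℝⁿ`, the unit vector with entries `1/√n`. -/
noncomputable def v1 (n : ℕ) : Fin n → ℝ := fun _ => 1 / Real.sqrt n

/-- `v₂ ∈ ℝⁿ`, the unit vector with entries `(i - (n+1)/2)/√(n(n²-1)/12)` (for
`i = 1, …, n`; index `i : Fin n` encodes the value `i + 1`). -/
noncomputable def v2 (n : ℕ) : Fin n → ℝ := fun i =>
  (((i : ℕ) + 1 : ℝ) - ((n : ℝ) + 1) / 2) / Real.sqrt ((n : ℝ) * ((n : ℝ) ^ 2 - 1) / 12)

/-- The matrix `(M_n)_{ij} = 1_{i<j} + (1/2) 1_{i=j}`. -/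
noncomputable def Mmat (n : ℕ) : Matrix (Fin n) (Fin n) ℝ :=
  Matrix.of fun i j => if i < j then 1 else if i = j then 1 / 2 else 0

/-- The projection `I - v₁v₁ᵀ - v₂v₂ᵀ`. -/
noncomputable def projMat (n : ℕ) : Matrix (Fin n) (Fin n) ℝ :=
  1 - Matrix.vecMulVec (v1 n) (v1 n) - Matrix.vecMulVec (v2 n) (v2 n)

/-- `M_n^* = (I - v₁v₁ᵀ - v₂v₂ᵀ) M_n (I - v₁v₁ᵀ - v₂v₂ᵀ)`. -/
noncomputable def Mstar (n : ℕ) : Matrix (Fin n) (Fin n) ℝ :=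
  projMat n * Mmat n * projMat n

/-!
Write `Mₙ = (J + S)/2`, where `J` is the all-ones matrix and `S i j = sign (j - i)`. The
projection `P = I - v₁v₁ᵀ - v₂v₂ᵀ` kills the all-ones vector, so `Mₙ* = PSP/2`, which is
skew-symmetric because `S` is. With the centred index `c i = i - (n-1)/2` one has `v₂ ∝ c`, and
`S` acts on the two directions removed by `P` by `S1 = -2c` and `Sc = (n²-1)/4 - c²`. Expanding
`(Pe_i)ᵀ S (Pe_j)` bilinearly and using skew-symmetry, everything cancels except
`(PSP)_{ij} = S_{ij} + (c_i (Sc)_j - c_j (Sc)_i) / ‖c‖²`, a cubic in `c_i, c_j`; in the variables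
`x = -2c/(n-1) ∈ [-1, 1]` it is the stated formula, and its terms are bounded on `[-1, 1]²`.
-/

section SkewSandwich

variable {m R : Type*} [Fintype m]

theorem vecMul_eq_neg_mulVec_of_transpose_eq_neg [CommRing R] {S : Matrix m m R} (hS : Sᵀ = -S)
    (v : m → R) : v ᵥ* S = -(S *ᵥ v) := by
  rw [← mulVec_transpose, hS, neg_mulVec]

theorem dotProduct_mulVec_eq_neg_of_transpose_eq_neg [CommRing R] {S : Matrix m m R}
    (hS : Sᵀ = -S) (v w : m → R) : v ⬝ᵥ S *ᵥ w = -(w ⬝ᵥ S *ᵥ v) := by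
  rw [dotProduct_mulVec, vecMul_eq_neg_mulVec_of_transpose_eq_neg hS, neg_dotProduct,
    dotProduct_comm]

theorem dotProduct_mulVec_self_of_transpose_eq_neg [Field R] [CharZero R] {S : Matrix m m R}
    (hS : Sᵀ = -S) (v : m → R) : v ⬝ᵥ S *ᵥ v = 0 := by
  linear_combination dotProduct_mulVec_eq_neg_of_transpose_eq_neg hS v v / 2

theorem sandwich_one_sub_vecMulVec_sub_vecMulVec_apply [DecidableEq m] [Field R] [CharZero R]
    {S : Matrix m m R} (hS : Sᵀ = -S) (a b : R) (u w : m → R) (i j : m) :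
    ((1 - a • vecMulVec u u - b • vecMulVec w w) * S
        * (1 - a • vecMulVec u u - b • vecMulVec w w)) i j
      = S i j + a * (u i * (S *ᵥ u) j - u j * (S *ᵥ u) i)
        + b * (w i * (S *ᵥ w) j - w j * (S *ᵥ w) i)
        + a * b * (u ⬝ᵥ S *ᵥ w) * (u i * w j - w i * u j) := by
  simp only [sub_mul, mul_sub, Matrix.smul_mul, Matrix.mul_smul, Matrix.one_mul, Matrix.mul_one,
    vecMulVec_mul, mul_vecMulVec, smul_mulVec, vecMulVec_mulVec, op_smul_eq_smul,
    vecMul_eq_neg_mulVec_of_transpose_eq_neg hS, neg_dotProduct, dotProduct_comm (S *ᵥ _) _,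
    dotProduct_mulVec_self_of_transpose_eq_neg hS,
    dotProduct_mulVec_eq_neg_of_transpose_eq_neg hS w u, Matrix.sub_apply, Matrix.smul_apply,
    vecMulVec_apply, Pi.smul_apply, Pi.neg_apply, smul_eq_mul]
  ring

end SkewSandwich

noncomputable def centeredIndex (n : ℕ) (i : Fin n) : ℝ := ((i : ℕ) : ℝ) - ((n : ℝ) - 1) / 2

noncomputable def signMat (n : ℕ) : Matrix (Fin n) (Fin n) ℝ :=
  of fun i j => (if i ≤ j then 1 else 0) - (if j ≤ i then 1 else 0)

variable {n : ℕ}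

theorem signMat_transpose : (signMat n)ᵀ = -signMat n := by
  ext i j
  simp only [signMat, transpose_apply, of_apply, Matrix.neg_apply]
  ring

theorem Mmat_eq : Mmat n = (1 / 2 : ℝ) • (vecMulVec 1 1 + signMat n) := by
  ext i j
  simp only [Mmat, signMat, of_apply, Matrix.smul_apply, Matrix.add_apply, vecMulVec_apply,
    Pi.one_apply, smul_eq_mul]
  rcases lt_trichotomy i j with h | rfl | h
  · norm_num [h, h.le, h.not_ge]
  · norm_num
  · norm_num [h.le, h.not_ge, h.ne', h.not_gt]

theorem projMat_eq : projMat n = 1 - (n : ℝ)⁻¹ • vecMulVec 1 1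
    - ((n : ℝ) * ((n : ℝ) ^ 2 - 1) / 12)⁻¹
      • vecMulVec (centeredIndex n) (centeredIndex n) := by
  have hσ : 0 ≤ (n : ℝ) * ((n : ℝ) ^ 2 - 1) / 12 := by
    rcases n.eq_zero_or_pos with rfl | hn
    · simp
    · have : (1 : ℝ) ≤ n := by exact_mod_cast hn
      exact div_nonneg (mul_nonneg (by positivity) (by nlinarith)) (by norm_num)
  ext i j
  simp only [projMat, Matrix.sub_apply, Matrix.smul_apply, vecMulVec_apply, v1, v2, Pi.one_apply,
    smul_eq_mul, centeredIndex, div_mul_div_comm, Real.mul_self_sqrt hσ,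
    Real.mul_self_sqrt (Nat.cast_nonneg n)]
  ring

theorem signMat_mulVec_apply_eq_sum_range (f : ℕ → ℝ) (i : Fin n) :
    (signMat n *ᵥ fun k => f k) i
      = ∑ m ∈ Finset.range n, f m - ∑ m ∈ Finset.range i, f m
        - ∑ m ∈ Finset.range (i + 1), f m := by
  have hge : ∑ k : Fin n, (if i ≤ k then f k else 0)
      = ∑ m ∈ Finset.range n, f m - ∑ m ∈ Finset.range i, f m := by
    simp only [Fin.le_def]
    rw [Fin.sum_univ_eq_sum_range (fun m => if (i : ℕ) ≤ m then f m else 0),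
      ← Finset.sum_filter, ← Finset.sum_range_add_sum_Ico _ i.is_lt.le, add_sub_cancel_left]
    congr 1
    ext m
    simp only [Finset.mem_filter, Finset.mem_range, Finset.mem_Ico, and_comm]
  have hle : ∑ k : Fin n, (if k ≤ i then f k else 0) = ∑ m ∈ Finset.range (i + 1), f m := by
    simp only [Fin.le_def]
    rw [Fin.sum_univ_eq_sum_range (fun m => if m ≤ (i : ℕ) then f m else 0),
      ← Finset.sum_filter]
    congr 1
    ext m
    simp only [Finset.mem_filter, Finset.mem_range]
    omega
  simp only [mulVec, dotProduct, signMat, of_apply, sub_mul, ite_mul, one_mul, zero_mul,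
    Finset.sum_sub_distrib, hge, hle]

theorem sum_range_natCast_sub (L : ℕ) (a : ℝ) :
    ∑ m ∈ Finset.range L, ((m : ℝ) - a) = L * ((L : ℝ) - 1) / 2 - L * a := by
  induction L with
  | zero => simp
  | succ L ih => rw [Finset.sum_range_succ, ih]; push_cast; ring

theorem signMat_mulVec_one : signMat n *ᵥ 1 = (-2 : ℝ) • centeredIndex n := by
  ext i
  have h := signMat_mulVec_apply_eq_sum_range (fun _ => (1 : ℝ)) i
  simp only [Finset.sum_const, Finset.card_range, nsmul_eq_mul, mul_one] at h
  rw [show (1 : Fin n → ℝ) = fun _ => 1 from rfl, h, Pi.smul_apply, centeredIndex]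
  push_cast
  ring

theorem signMat_mulVec_centeredIndex :
    signMat n *ᵥ centeredIndex n = fun i => ((n : ℝ) ^ 2 - 1) / 4 - centeredIndex n i ^ 2 := by
  ext i
  refine (signMat_mulVec_apply_eq_sum_range (fun m => (m : ℝ) - ((n : ℝ) - 1) / 2) i).trans ?_
  rw [sum_range_natCast_sub, sum_range_natCast_sub, sum_range_natCast_sub, centeredIndex]
  push_cast
  ring

-- Skew-symmetry gives `1 ⬝ S c = -(c ⬝ S 1) = 2 ‖c‖²`, while `S c = (n²-1)/4 - c²` gives
-- `1 ⬝ S c = n(n²-1)/4 - ‖c‖²`.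
theorem centeredIndex_dotProduct_self :
    centeredIndex n ⬝ᵥ centeredIndex n = (n : ℝ) * ((n : ℝ) ^ 2 - 1) / 12 := by
  have h := dotProduct_mulVec_eq_neg_of_transpose_eq_neg signMat_transpose 1 (centeredIndex n)
  rw [signMat_mulVec_one, signMat_mulVec_centeredIndex, one_dotProduct, dotProduct_smul] at h
  simp only [Finset.sum_sub_distrib, Finset.sum_const, Finset.card_univ, Fintype.card_fin,
    nsmul_eq_mul] at h
  simp only [dotProduct, ← sq, smul_eq_mul] at h ⊢
  linarith

theorem one_dotProduct_signMat_mulVec_centeredIndex :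
    1 ⬝ᵥ signMat n *ᵥ centeredIndex n = (n : ℝ) * ((n : ℝ) ^ 2 - 1) / 6 := by
  rw [dotProduct_mulVec_eq_neg_of_transpose_eq_neg signMat_transpose, signMat_mulVec_one,
    dotProduct_smul, centeredIndex_dotProduct_self, smul_eq_mul]
  ring

theorem centeredIndex_dotProduct_one : centeredIndex n ⬝ᵥ 1 = 0 := by
  have h := dotProduct_mulVec_self_of_transpose_eq_neg signMat_transpose (1 : Fin n → ℝ)
  rw [signMat_mulVec_one, dotProduct_smul, smul_eq_mul, dotProduct_comm] at h
  linarith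

theorem projMat_mulVec_one : projMat n *ᵥ 1 = 0 := by
  rcases n.eq_zero_or_pos with rfl | hn
  · exact Subsingleton.elim _ _
  simp only [projMat_eq, sub_mulVec, one_mulVec, smul_mulVec, vecMulVec_mulVec, op_smul_eq_smul,
    centeredIndex_dotProduct_one, zero_smul, smul_zero, one_dotProduct_one,
    Fintype.card_fin, smul_smul, inv_mul_cancel₀ (Nat.cast_ne_zero.mpr hn.ne' : (n : ℝ) ≠ 0),
    one_smul, sub_self]

theorem projMat_transpose : (projMat n)ᵀ = projMat n := by
  simp only [projMat, transpose_sub, transpose_one, transpose_vecMulVec]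

theorem Mstar_eq : Mstar n = (1 / 2 : ℝ) • (projMat n * signMat n * projMat n) := by
  rw [Mstar, Mmat_eq, Matrix.mul_smul, Matrix.smul_mul, Matrix.mul_add, Matrix.add_mul,
    mul_vecMulVec, projMat_mulVec_one, zero_vecMulVec, Matrix.zero_mul, zero_add]

theorem Mstar_transpose : (Mstar n)ᵀ = -Mstar n := by
  rw [Mstar_eq, transpose_smul, transpose_mul, transpose_mul, projMat_transpose, signMat_transpose,
    Matrix.neg_mul, Matrix.mul_neg, smul_neg, Matrix.mul_assoc]

noncomputable def gridPoint (n : ℕ) (i : Fin n) : ℝ :=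
  ((n : ℝ) + 1 - 2 * ((i : ℕ) + 1)) / ((n : ℝ) - 1)

noncomputable def mstarKernel (n : ℕ) (x y : ℝ) : ℝ :=
  ((if x ≥ y then (1 : ℝ) else 0) - (if x ≤ y then (1 : ℝ) else 0)) / 2
    - 3 * (x - y) * (1 - 1 / (n : ℝ)) / 4
    - 3 * x * y * (x - y) * ((n : ℝ) - 1) ^ 2 / (4 * (n : ℝ) * ((n : ℝ) + 1))

theorem gridPoint_le_gridPoint_iff (hn : 2 ≤ n) {i j : Fin n} :
    gridPoint n i ≤ gridPoint n j ↔ j ≤ i := by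
  have hpos : (0 : ℝ) < n - 1 := by
    have : (2 : ℝ) ≤ n := by exact_mod_cast hn
    linarith
  rw [gridPoint, gridPoint, div_le_div_iff_of_pos_right hpos, Fin.le_def]
  constructor <;> intro h
  · exact_mod_cast (by linarith : ((j : ℕ) : ℝ) ≤ i)
  · have : ((j : ℕ) : ℝ) ≤ i := by exact_mod_cast h
    linarith

theorem abs_gridPoint_le (hn : 2 ≤ n) (i : Fin n) : |gridPoint n i| ≤ 1 := by
  have hpos : (0 : ℝ) < n - 1 := by
    have : (2 : ℝ) ≤ n := by exact_mod_cast hn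
    linarith
  have hi : ((i : ℕ) : ℝ) + 1 ≤ n := by exact_mod_cast i.is_lt
  rw [gridPoint, abs_div, abs_of_pos hpos, div_le_one hpos, abs_le]
  have hi0 : (0 : ℝ) ≤ (i : ℕ) := Nat.cast_nonneg _
  constructor <;> linarith

theorem Mstar_apply (hn : 2 ≤ n) (i j : Fin n) :
    Mstar n i j = mstarKernel n (gridPoint n i) (gridPoint n j) := by
  have hn' : (2 : ℝ) ≤ n := by exact_mod_cast hn
  have h1 : (n : ℝ) - 1 ≠ 0 := by linarith
  have h2 : (n : ℝ) + 1 ≠ 0 := by linarith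
  have h3 : (n : ℝ) ≠ 0 := by linarith
  have h4 : (n : ℝ) ^ 2 - 1 ≠ 0 := by nlinarith
  rw [Mstar_eq, Matrix.smul_apply, projMat_eq,
    sandwich_one_sub_vecMulVec_sub_vecMulVec_apply signMat_transpose,
    one_dotProduct_signMat_mulVec_centeredIndex, signMat_mulVec_one, signMat_mulVec_centeredIndex]
  simp only [mstarKernel, signMat, of_apply, ge_iff_le, gridPoint_le_gridPoint_iff hn,
    Pi.one_apply, Pi.smul_apply, smul_eq_mul]
  simp only [centeredIndex, gridPoint]
  field_simp
  ring

theorem abs_mstarKernel_le {x y : ℝ} (hx : |x| ≤ 1) (hy : |y| ≤ 1) :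
    |mstarKernel n x y| ≤ 4 := by
  set s : ℝ := (if x ≥ y then (1 : ℝ) else 0) - (if x ≤ y then (1 : ℝ) else 0)
  set a : ℝ := 1 - 1 / (n : ℝ)
  set b : ℝ := ((n : ℝ) - 1) ^ 2 / (4 * (n : ℝ) * ((n : ℝ) + 1))
  have hs : |s| ≤ 1 := by
    simp only [s]
    split_ifs <;> norm_num
  have ha : |a| ≤ 1 := by
    have : 0 ≤ 1 / (n : ℝ) ∧ 1 / (n : ℝ) ≤ 1 := by
      rcases n.eq_zero_or_pos with rfl | hn
      · simp
      · exact ⟨by positivity, div_le_one_of_le₀ (by exact_mod_cast hn) (by positivity)⟩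
    rw [abs_le]
    constructor <;> linarith
  have hb : |b| ≤ 1 / 4 := by
    rcases n.eq_zero_or_pos with rfl | hn
    · norm_num [b]
    have hn' : (1 : ℝ) ≤ n := by exact_mod_cast hn
    rw [abs_of_nonneg (by positivity), div_le_iff₀ (by positivity)]
    nlinarith
  have hxy : |x - y| ≤ 2 := (abs_sub x y).trans (by linarith)
  have hxy' : |x * y| ≤ 1 := by
    rw [abs_mul]
    exact mul_le_one₀ hx (abs_nonneg y) hy
  calc |mstarKernel n x y| = |s / 2 - 3 / 4 * ((x - y) * a) - 3 * (x * y * (x - y)) * b| := by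
        simp only [mstarKernel, s, a, b]
        congr 1
        ring
    _ ≤ |s| / 2 + 3 / 4 * (|x - y| * |a|) + 3 * (|x * y| * |x - y|) * |b| := by
        refine (abs_sub _ _).trans (add_le_add ((abs_sub _ _).trans (le_of_eq ?_)) (le_of_eq ?_))
        · simp only [abs_div, abs_mul, abs_two]
          norm_num
        · simp only [abs_mul]
          norm_num
    _ ≤ 1 / 2 + 3 / 4 * (2 * 1) + 3 * (1 * 2) * (1 / 4) := by gcongr
    _ ≤ 4 := by norm_num

theorem stmt_13 :
    (∀ n : ℕ, 2 ≤ n → ∀ i j : Fin n,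
      Mstar n i j =
        (((if ((n : ℝ) + 1 - 2 * ((i : ℕ) + 1)) / ((n : ℝ) - 1)
              ≥ ((n : ℝ) + 1 - 2 * ((j : ℕ) + 1)) / ((n : ℝ) - 1) then (1 : ℝ) else 0)
          - (if ((n : ℝ) + 1 - 2 * ((i : ℕ) + 1)) / ((n : ℝ) - 1)
              ≤ ((n : ℝ) + 1 - 2 * ((j : ℕ) + 1)) / ((n : ℝ) - 1) then (1 : ℝ) else 0)) / 2
          - 3 * (((n : ℝ) + 1 - 2 * ((i : ℕ) + 1)) / ((n : ℝ) - 1)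
              - ((n : ℝ) + 1 - 2 * ((j : ℕ) + 1)) / ((n : ℝ) - 1)) * (1 - 1 / (n : ℝ)) / 4
          - 3 * (((n : ℝ) + 1 - 2 * ((i : ℕ) + 1)) / ((n : ℝ) - 1))
              * (((n : ℝ) + 1 - 2 * ((j : ℕ) + 1)) / ((n : ℝ) - 1))
              * (((n : ℝ) + 1 - 2 * ((i : ℕ) + 1)) / ((n : ℝ) - 1)
                - ((n : ℝ) + 1 - 2 * ((j : ℕ) + 1)) / ((n : ℝ) - 1))
              * ((n : ℝ) - 1) ^ 2 / (4 * (n : ℝ) * ((n : ℝ) + 1)))) ∧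
    (∀ n : ℕ, 2 ≤ n → (Mstar n)ᵀ = -Mstar n) ∧
    (∃ C : ℝ, 0 < C ∧ ∀ n : ℕ, 2 ≤ n → ∀ i j : Fin n, |Mstar n i j| ≤ C) :=
  ⟨fun _ hn i j => Mstar_apply hn i j, fun _ _ => Mstar_transpose,
    ⟨4, by norm_num, fun _ hn i j => by
      rw [Mstar_apply hn]
      exact abs_mstarKernel_le (abs_gridPoint_le hn i) (abs_gridPoint_le hn j)⟩⟩
end

section
/- Let $M_n$ be the $n\times n$ matrix with $(M_n)_{ij} = \mathbb{1}_{i<j} + \tfrac12\mathbb{1}_{i=j}$. For every integer $t \ge 1$ there exists a matrix $R$ of rank at most $t$ such that $\|M_n - R\|_F^2 \le C n^2/t$ for an absolute constant $C > 0$, where $\|\cdot\|_F$ denotes the Frobenius norm. -/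
theorem stmt_19 :
    ∃ C : ℝ, 0 < C ∧ ∀ (n t : ℕ), 1 ≤ t →
      ∃ R : Matrix (Fin n) (Fin n) ℝ, R.rank ≤ t ∧
        ∑ i : Fin n, ∑ j : Fin n,
          ((Matrix.of (fun i j : Fin n =>
              if i < j then (1 : ℝ) else if i = j then 1 / 2 else 0) - R) i j) ^ 2
          ≤ C * (n : ℝ) ^ 2 / (t : ℝ) := by
  refine ⟨2, by norm_num, fun n t ht => ?_⟩
  set M : Matrix (Fin n) (Fin n) ℝ :=
    Matrix.of (fun i j : Fin n =>
      if i < j then (1 : ℝ) else if i = j then 1 / 2 else 0) with hM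
  have htR : (0:ℝ) < t := by exact_mod_cast ht
  by_cases hnt : n ≤ t
  · -- take R = M
    refine ⟨M, ?_, ?_⟩
    · calc M.rank ≤ Fintype.card (Fin n) := Matrix.rank_le_card_width M
        _ = n := Fintype.card_fin n
        _ ≤ t := hnt
    · simp only [sub_self]
      have : ∀ i : Fin n, ∑ j : Fin n, ((0 : Matrix (Fin n) (Fin n) ℝ) i j) ^ 2 = 0 := by
        intro i; simp
      rw [Finset.sum_congr rfl (fun i _ => this i)]
      simp
      positivity
  · push_neg at hnt
    have hn : 0 < n := by omega
    set s : ℕ := (n + t - 1) / t with hs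
    have hspos : 0 < s := by
      rw [hs]
      apply Nat.one_le_div_iff (lt_of_lt_of_le Nat.zero_lt_one ht) |>.2
      omega
    -- n ≤ s * t
    have hnst : n ≤ s * t := by
      have h1 := Nat.div_add_mod (n + t - 1) t
      have h2 := Nat.mod_lt (n + t - 1) (lt_of_lt_of_le Nat.zero_lt_one ht)
      rw [hs, Nat.mul_comm]; omega
    -- s * t ≤ 2 * n
    have hst2 : s * t ≤ 2 * n := by
      have h1 : t * ((n + t - 1) / t) ≤ n + t - 1 := Nat.mul_div_le _ _
      rw [hs, Nat.mul_comm]; omega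
    have hdivlt : ∀ i : Fin n, i.val / s < t := by
      intro i
      rw [Nat.div_lt_iff_lt_mul hspos]
      exact lt_of_lt_of_le i.isLt (le_of_le_of_eq hnst (Nat.mul_comm s t))
    set R : Matrix (Fin n) (Fin n) ℝ :=
      Matrix.of (fun i j : Fin n => if i.val / s < j.val / s then (1:ℝ) else 0) with hR
    refine ⟨R, ?_, ?_⟩
    · -- rank bound: R = A * B
      set A : Matrix (Fin n) (Fin t) ℝ :=
        Matrix.of (fun i k => if i.val / s = k.val then (1:ℝ) else 0) with hA
      set B : Matrix (Fin t) (Fin n) ℝ :=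
        Matrix.of (fun k j => if k.val < j.val / s then (1:ℝ) else 0) with hB
      have hAB : R = A * B := by
        ext i j
        rw [Matrix.mul_apply]
        have hkey : ∀ k : Fin t, A i k * B k j =
            if (⟨i.val / s, hdivlt i⟩ : Fin t) = k then B k j else 0 := by
          intro k
          by_cases hk : i.val / s = k.val
          · have : (⟨i.val / s, hdivlt i⟩ : Fin t) = k := Fin.ext hk
            simp [hA, hk, this]
          · have : (⟨i.val / s, hdivlt i⟩ : Fin t) ≠ k := fun h => hk (congrArg Fin.val h)
            simp [hA, hk, this]
        rw [Finset.sum_congr rfl (fun k _ => hkey k), Finset.sum_ite_eq]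
        simp [hR, hB]
      rw [hAB]
      calc (A * B).rank ≤ A.rank := Matrix.rank_mul_le_left A B
        _ ≤ Fintype.card (Fin t) := Matrix.rank_le_card_width A
        _ = t := Fintype.card_fin t
    · -- error bound
      have hentry : ∀ i j : Fin n,
          ((M - R) i j) ^ 2 ≤ if i.val / s = j.val / s then (1:ℝ) else 0 := by
        intro i j
        rcases lt_trichotomy (i.val / s) (j.val / s) with h | h | h
        · -- i < j, M = 1, R = 1
          have hij : i < j := by
            by_contra hc
            push_neg at hc
            exact absurd (Nat.div_le_div_right (c := s) (Fin.le_def.1 hc)) (not_le.2 h)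
          have : (M - R) i j = 0 := by
            simp [hM, hR, Matrix.sub_apply, hij, h]
          rw [this]
          simp [Nat.ne_of_lt h]
        · have hle : ((M - R) i j)^2 ≤ 1 := by
            have hR0 : R i j = 0 := by simp [hR, h]
            rw [Matrix.sub_apply, hR0, sub_zero, hM]
            by_cases h1 : i < j <;> by_cases h2 : i = j <;> norm_num [h1, h2]
          simpa [h] using hle
        · -- i > j, M = 0, R = 0
          have hij : j < i := by
            by_contra hc
            push_neg at hc
            exact absurd (Nat.div_le_div_right (c := s) (Fin.le_def.1 hc)) (not_le.2 h)
          have : (M - R) i j = 0 := by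
            simp [hM, hR, Matrix.sub_apply, not_lt_of_gt hij, not_lt_of_gt h, hij.ne']
          rw [this]
          simp [Nat.ne_of_gt h]
      have hrow : ∀ i : Fin n,
          ∑ j : Fin n, (if i.val / s = j.val / s then (1:ℝ) else 0) ≤ s := by
        intro i
        rw [Finset.sum_boole]
        have hcard : (Finset.univ.filter fun j : Fin n => i.val / s = j.val / s).card
            ≤ s := by
          have := Finset.card_le_card_of_injOn (f := fun j : Fin n => j.val % s)
            (s := Finset.univ.filter fun j : Fin n => i.val / s = j.val / s)
            (t := Finset.range s)
            (fun j _ => Finset.mem_range.2 (Nat.mod_lt _ hspos))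
            (by
              intro a ha b hb hab
              simp only [Finset.mem_coe, Finset.mem_filter] at ha hb
              have hd : a.val / s = b.val / s := ha.2.symm.trans hb.2
              have h1 := Nat.div_add_mod a.val s
              have h2 := Nat.div_add_mod b.val s
              rw [hd] at h1
              simp only at hab
              apply Fin.ext
              omega)
          simpa using this
        exact_mod_cast hcard
      calc ∑ i : Fin n, ∑ j : Fin n, ((M - R) i j) ^ 2
          ≤ ∑ i : Fin n, ∑ j : Fin n, (if i.val / s = j.val / s then (1:ℝ) else 0) := by
            apply Finset.sum_le_sum
            intro i _
            exact Finset.sum_le_sum (fun j _ => hentry i j)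
        _ ≤ ∑ _i : Fin n, (s : ℝ) := Finset.sum_le_sum (fun i _ => hrow i)
        _ = (n : ℝ) * s := by simp [mul_comm]
        _ ≤ 2 * (n : ℝ) ^ 2 / t := by
            rw [le_div_iff₀ htR]
            have : (n : ℝ) * s * t = (n : ℝ) * (s * t) := by ring
            rw [this]
            have h2 : ((n : ℕ) : ℝ) * ((s * t : ℕ) : ℝ) ≤ (n : ℝ) * ((2 * n : ℕ) : ℝ) := by
              apply mul_le_mul_of_nonneg_left _ (by positivity)
              exact_mod_cast hst2
            push_cast at h2
            nlinarith [h2]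
end
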